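/- Fix hypertoric data in a standard p-frame: integers k, d ≥ 1 with n = k + d, a subset p ⊆ {1,…,n} of size d with complement A partitioned as A = A⁺ ⊔ A⁻ (|A| = k), and an integer matrix C = (C_{ij})_{i∈p, j∈A}. Let F := ℚ(t, h, α_1,…,α_d) be a rational function field, set q := t², ħ := h², and define x_j := 1 for j ∈ A⁺, x_j := ħ^{−1} for j ∈ A⁻, and x_i := α_i · h^{−2 Σ_{j∈A⁻} C_{ij}} for i ∈ p. For D ∈ ℤ let (y; q)_D := ∏_{l=0}^{D−1}(1 − q^l y) if D ≥ 0 and ∏_{l=1}^{−D}(1 − q^{−l} y)^{−1} if D < 0, and {y}_D := (−t h^{−1})^D (ħ y; q)_D / (q y; q)_D. For m ∈ ℕ^A set d_j := m_j for j ∈ A⁺, d_j := −m_j for j ∈ A⁻, and D_i := Σ_{j∈A} C_{ij} d_j for i ∈ p, and define the bare vertex series V := Σ_{m∈ℕ^A} t^{−(Σ_{j∈A} d_j + Σ_{i∈p} D_i)} ∏_{j∈A⁺} {1}_{d_j} ∏_{j∈A⁻} {ħ^{−1}}_{d_j} ∏_{i∈p} {x_i}_{D_i} · ζ^m in the formal power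 series ring F[[ζ_j : j ∈ A]]. For i ∈ {1,…,n} let 𝒵_i be the F-linear operator on F[[ζ]] that multiplies the coefficient of ζ^m by x_i q^{D_i(m)}, where D_i(m) := d_i for i ∈ A and D_i(m) := Σ_{j∈A} C_{ij} d_j for i ∈ p. Let S = S⁺ ⊔ S⁻ ⊆ {1,…,n} and v ∈ ℤ^n be a circuit relation vector: v_i = 1 for i ∈ S⁺, v_i = −1 for i ∈ S⁻, v_i = 0 for i ∉ S, satisfying v_i = Σ_{j∈A} C_{ij} v_j for all i ∈ p, and the effectivity condition v_j ≥ 0 for j ∈ A⁺ and v_j ≤ 0 for j ∈ A⁻. Then ∏_{i∈S⁺}(1 − 𝒵_i) ∏_{i∈S⁻}(1 − ħ𝒵_i) V = (−h^{−1})^{|S⁺| − |S⁻|} · ζ^{|v_A|} · ∏_{i∈S⁺}(1 − ħ𝒵_i) ∏_{i∈S⁻}(1 − 𝒵_i) V, where ζ^{|v_A|} := ∏_{j∈A} ζ_j^{|v_j|} acts by multiplication. -/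

import Mathlib

/-!
Both sides are diagonal in the monomial basis up to a shift: `𝒵ᵢ` scales the coefficient of
`ζ^m` by `xᵢ q^{Dᵢ(m)}`, while multiplying by `ζ^{|v_A|}` replaces `m` by `|v_A| + m`, which by
effectivity and the circuit relation shifts every `Dᵢ` by `vᵢ`. The coefficient of `V` is
`t^{-Σ Dᵢ} ∏ᵢ {xᵢ}_{Dᵢ}`, and the q-Pochhammer recursion gives
`(1 - x q^{D+1}) {x}_{D+1} = s (1 - ħ x q^D) {x}_D` with `s = -t h⁻¹`. Applied at `i ∈ S⁺` and
backwards at `i ∈ S⁻`, the resulting powers of `s` combine with the shift of `t^{-Σ Dᵢ}` into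
`(-h⁻¹)^{|S⁺| - |S⁻|}`. If `m` does not dominate `|v_A|`, some `j ∈ S` has `mⱼ = 0`, and then the
factor `1 - xⱼ` (`j ∈ A⁺`) or `1 - ħ xⱼ` (`j ∈ A⁻`) of the left side vanishes. The recursion only
needs the factors `1 - t^a h^b αᵢ^c` with `(a, b, c) ≠ 0` to be nonzero, which holds because
`t`, `h`, `αᵢ` are independent variables.
-/

open Finset

noncomputable section

/-- the base field `F = ℚ(t, h, α₁, …, αₙ)` (the variables `αᵢ` with `i ∈ p` are the
non-redundant equivariant parameters; only those are used below). -/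
abbrev FF (n : ℕ) := FractionRing (MvPolynomial (Fin 2 ⊕ Fin n) ℚ)

def tVar (n : ℕ) : FF n :=
  algebraMap (MvPolynomial (Fin 2 ⊕ Fin n) ℚ) (FF n) (MvPolynomial.X (Sum.inl 0))

def hVar (n : ℕ) : FF n :=
  algebraMap (MvPolynomial (Fin 2 ⊕ Fin n) ℚ) (FF n) (MvPolynomial.X (Sum.inl 1))

def aVar (n : ℕ) (i : Fin n) : FF n :=
  algebraMap (MvPolynomial (Fin 2 ⊕ Fin n) ℚ) (FF n) (MvPolynomial.X (Sum.inr i))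

/-- `q := t²`. -/
def qF (n : ℕ) : FF n := tVar n ^ 2

/-- `ħ := h²`. -/
def hbarF (n : ℕ) : FF n := hVar n ^ 2

/-- the q-Pochhammer symbol `(y; q)_D` for `D ∈ ℤ`. -/
def qPochZ {K : Type*} [Field K] (q y : K) : ℤ → K
  | Int.ofNat D => ∏ l ∈ Finset.range D, (1 - q ^ l * y)
  | Int.negSucc m => (∏ l ∈ Finset.range (m + 1), (1 - q ^ (-(l : ℤ) - 1) * y))⁻¹

/-- `{y}_D := s^D (ħy;q)_D/(qy;q)_D`, where `s = -t h⁻¹ = -q^{1/2}ħ^{-1/2}`. -/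
def braceF {K : Type*} [Field K] (q hbar s y : K) (D : ℤ) : K :=
  s ^ D * qPochZ q (hbar * y) D / qPochZ q (q * y) D

/-- the fixed-point restrictions `xᵢ`: `1` on `A⁺`, `ħ⁻¹` on `A⁻`, and
`αᵢ h^{-2 Σ_{j∈A⁻} C_{ij}}` on `p`. -/
def xResF (n : ℕ) (Aplus Aminus : Finset (Fin n)) (C : Fin n → Fin n → ℤ) (i : Fin n) :
    FF n :=
  if i ∈ Aplus then 1
  else if i ∈ Aminus then (hbarF n)⁻¹
  else aVar n i * hVar n ^ (-2 * ∑ j ∈ Aminus, C i j)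

/-- extension by zero of a degree vector `m ∈ ℕ^A` to all of `{1,…,n}`. -/
def mExt (n : ℕ) (p : Finset (Fin n)) (m : {j : Fin n // j ∈ pᶜ} →₀ ℕ) (j : Fin n) : ℕ :=
  if h : j ∈ pᶜ then m ⟨j, h⟩ else 0

/-- `dⱼ := mⱼ` for `j ∈ A⁺` and `dⱼ := -mⱼ` for `j ∈ A⁻`. -/
def dDeg (n : ℕ) (p Aplus : Finset (Fin n)) (m : {j : Fin n // j ∈ pᶜ} →₀ ℕ)
    (j : Fin n) : ℤ :=
  if j ∈ Aplus then (mExt n p m j : ℤ) else -(mExt n p m j : ℤ)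

/-- `Dᵢ(m) := dᵢ` for `i ∈ A` and `Dᵢ(m) := Σ_{j∈A} C_{ij} dⱼ` for `i ∈ p`. -/
def DDeg (n : ℕ) (p Aplus : Finset (Fin n)) (C : Fin n → Fin n → ℤ)
    (m : {j : Fin n // j ∈ pᶜ} →₀ ℕ) (i : Fin n) : ℤ :=
  if i ∈ pᶜ then dDeg n p Aplus m i
  else ∑ j ∈ pᶜ, C i j * dDeg n p Aplus m j

/-- the coefficient of `ζ^m` in the bare vertex series `V`. -/
def Vcoeff (n : ℕ) (p Aplus Aminus : Finset (Fin n)) (C : Fin n → Fin n → ℤ)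
    (m : {j : Fin n // j ∈ pᶜ} →₀ ℕ) : FF n :=
  tVar n ^ (-((∑ j ∈ pᶜ, dDeg n p Aplus m j) + ∑ i ∈ p, DDeg n p Aplus C m i))
    * (∏ j ∈ Aplus,
        braceF (qF n) (hbarF n) (-(tVar n * (hVar n)⁻¹)) 1 (dDeg n p Aplus m j))
    * (∏ j ∈ Aminus,
        braceF (qF n) (hbarF n) (-(tVar n * (hVar n)⁻¹)) ((hbarF n)⁻¹) (dDeg n p Aplus m j))
    * ∏ i ∈ p,
        braceF (qF n) (hbarF n) (-(tVar n * (hVar n)⁻¹)) (xResF n Aplus Aminus C i)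
          (DDeg n p Aplus C m i)

theorem qPochZ_neg_natCast {K : Type*} [Field K] (q y : K) (k : ℕ) :
    qPochZ q y (-(k : ℤ)) = (∏ l ∈ range k, (1 - q ^ (-(l : ℤ) - 1) * y))⁻¹ := by
  cases k with
  | zero => simp [qPochZ]
  | succ k => rfl

theorem qPochZ_add_one {K : Type*} [Field K] (q y : K) {D : ℤ}
    (h : D < 0 → 1 - q ^ D * y ≠ 0) :
    qPochZ q y (D + 1) = qPochZ q y D * (1 - q ^ D * y) := by
  cases D with
  | ofNat k =>
    rw [show Int.ofNat k + 1 = Int.ofNat (k + 1) from rfl]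
    simp [qPochZ, prod_range_succ]
  | negSucc k =>
    have hk : Int.negSucc k = -(k : ℤ) - 1 := by omega
    have hc := h (Int.negSucc_lt_zero k)
    rw [show Int.negSucc k + 1 = -(k : ℤ) by omega, qPochZ_neg_natCast]
    simp only [qPochZ, prod_range_succ, mul_inv, hk] at hc ⊢
    rw [mul_assoc, inv_mul_cancel₀ hc, mul_one]

theorem braceF_succ {K : Type*} [Field K] {q hbar s y : K} {D : ℤ} (hq : q ≠ 0) (hs : s ≠ 0)
    (h₁ : 1 - y * q ^ (D + 1) ≠ 0) (h₂ : D < 0 → 1 - hbar * (y * q ^ D) ≠ 0) :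
    (1 - y * q ^ (D + 1)) * braceF q hbar s y (D + 1)
      = s * ((1 - hbar * (y * q ^ D)) * braceF q hbar s y D) := by
  have hqy : q ^ D * (q * y) = y * q ^ (D + 1) := by rw [zpow_add_one₀ hq]; ring
  have num := qPochZ_add_one q (hbar * y) (D := D) (fun hD => by
    rw [show q ^ D * (hbar * y) = hbar * (y * q ^ D) by ring]; exact h₂ hD)
  have den := qPochZ_add_one q (q * y) (D := D) (fun _ => by rwa [hqy])
  rw [braceF, braceF, num, den, hqy, zpow_add_one₀ hs]
  field_simp

theorem MvPowerSeries.coeff_toList_foldr_sub {σ R ι : Type*} [CommRing R]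
    (T : ι → MvPowerSeries σ R → MvPowerSeries σ R) (c : ι → (σ →₀ ℕ) → R)
    (hT : ∀ i f m, coeff m (T i f) = c i m * coeff m f) (S : Finset ι)
    (f : MvPowerSeries σ R) (m : σ →₀ ℕ) :
    coeff m (S.toList.foldr (fun i g => g - T i g) f) = (∏ i ∈ S, (1 - c i m)) * coeff m f := by
  rw [← prod_map_toList]
  induction S.toList with
  | nil => simp
  | cons i L ih => rw [List.foldr_cons, map_sub, hT, ih, List.map_cons, List.prod_cons]; ring

theorem Finset.prod_mul_prod_mul_prod_eq_pow_mul_pow {ι M : Type*} [CommMonoid M] [Fintype ι]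
    [DecidableEq ι] {S T : Finset ι} (hST : Disjoint S T) {a b a' b' F F' : ι → M} {c d : M}
    (hS : ∀ i ∈ S, a i * F i = c * (a' i * F' i))
    (hT : ∀ i ∈ T, b i * F i = d * (b' i * F' i))
    (hrest : ∀ i ∉ S ∪ T, F i = F' i) :
    (∏ i ∈ S, a i) * (∏ i ∈ T, b i) * ∏ i, F i
      = c ^ S.card * d ^ T.card * ((∏ i ∈ S, a' i) * (∏ i ∈ T, b' i) * ∏ i, F' i) := by
  have split (a b F : ι → M) : (∏ i ∈ S, a i) * (∏ i ∈ T, b i) * ∏ i, F i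
      = (∏ i ∈ S, a i * F i) * (∏ i ∈ T, b i * F i) * ∏ i ∈ (S ∪ T)ᶜ, F i := by
    rw [← prod_mul_prod_compl (S ∪ T), prod_union hST, prod_mul_distrib, prod_mul_distrib]
    ac_rfl
  rw [split, split, prod_congr rfl hS, prod_congr rfl hT,
    prod_congr rfl fun i hi => hrest i (mem_compl.1 hi)]
  simp only [prod_mul_distrib, prod_const]
  ac_rfl

theorem Finset.sum_eq_card_sub_card {ι : Type*} [Fintype ι] [DecidableEq ι] {S T : Finset ι}
    (hST : Disjoint S T) {v : ι → ℤ} (h₁ : ∀ i ∈ S, v i = 1) (h₂ : ∀ i ∈ T, v i = -1)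
    (h₀ : ∀ i, i ∉ S ∪ T → v i = 0) :
    ∑ i, v i = (S.card : ℤ) - T.card := by
  rw [← sum_subset (subset_univ (S ∪ T)) fun i _ hi => h₀ i hi, sum_union hST,
    sum_congr rfl h₁, sum_congr rfl h₂]
  simp [sub_eq_add_neg]

theorem zpow_neg_add_mul_pow_mul_inv_pow {K : Type*} [Field K] {t h : K} (ht : t ≠ 0) (hh : h ≠ 0)
    (a b : ℕ) (E : ℤ) :
    t ^ (-(E + ((a : ℤ) - b))) * ((-(t * h⁻¹)) ^ a * (-(t * h⁻¹))⁻¹ ^ b)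
      = (-h⁻¹) ^ ((a : ℤ) - b) * t ^ (-E) := by
  have hs : -(t * h⁻¹) ≠ 0 := by simp [ht, hh]
  rw [← zpow_natCast, ← zpow_natCast, inv_zpow', ← zpow_add₀ hs, ← sub_eq_add_neg,
    neg_mul_eq_mul_neg, mul_zpow, neg_add, zpow_add₀ ht, zpow_neg t ((a : ℤ) - b)]
  field_simp

theorem tVar_ne_zero (n : ℕ) : tVar n ≠ 0 :=
  IsFractionRing.to_map_eq_zero_iff.not.2 (MvPolynomial.X_ne_zero _)

theorem hVar_ne_zero (n : ℕ) : hVar n ≠ 0 :=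
  IsFractionRing.to_map_eq_zero_iff.not.2 (MvPolynomial.X_ne_zero _)

theorem tVar_pow_mul_hVar_pow_mul_aVar_pow_eq_algebraMap_monomial (n : ℕ) (i : Fin n) (a b c : ℕ) :
    tVar n ^ a * hVar n ^ b * aVar n i ^ c
      = algebraMap (MvPolynomial (Fin 2 ⊕ Fin n) ℚ) (FF n) (MvPolynomial.monomial
          (Finsupp.single (Sum.inl 0) a + Finsupp.single (Sum.inl 1) b
            + Finsupp.single (Sum.inr i) c) 1) := by
  simp only [tVar, hVar, aVar, ← map_pow, ← map_mul, MvPolynomial.X_pow_eq_monomial,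
    MvPolynomial.monomial_mul, mul_one]

theorem eq_zero_of_tVar_zpow_mul_hVar_zpow_mul_aVar_pow_eq_one {n : ℕ} {i : Fin n} {a b : ℤ}
    {c : ℕ} (h : tVar n ^ a * hVar n ^ b * aVar n i ^ c = 1) : a = 0 ∧ b = 0 ∧ c = 0 := by
  have ht := tVar_ne_zero n
  have hh := hVar_ne_zero n
  rw [← Int.toNat_sub_toNat_neg a, ← Int.toNat_sub_toNat_neg b, zpow_sub₀ ht, zpow_sub₀ hh,
    zpow_natCast, zpow_natCast, zpow_natCast, zpow_natCast] at h
  field_simp at h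
  replace h : tVar n ^ a.toNat * hVar n ^ b.toNat * aVar n i ^ c
      = tVar n ^ (-a).toNat * hVar n ^ (-b).toNat * aVar n i ^ 0 := by rw [h, pow_zero, mul_one]
  rw [tVar_pow_mul_hVar_pow_mul_aVar_pow_eq_algebraMap_monomial,
    tVar_pow_mul_hVar_pow_mul_aVar_pow_eq_algebraMap_monomial,
    (IsFractionRing.injective _ _).eq_iff,
    (MvPolynomial.monomial_left_injective one_ne_zero).eq_iff] at h
  have h0 := DFunLike.congr_fun h (Sum.inl 0)
  have h1 := DFunLike.congr_fun h (Sum.inl 1)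
  have h2 := DFunLike.congr_fun h (Sum.inr i)
  simp at h0 h1 h2
  omega

theorem one_sub_hVar_zpow_mul_aVar_pow_mul_qF_zpow_ne_zero {n : ℕ} (i : Fin n) {b e : ℤ} {c : ℕ}
    (h : ¬(e = 0 ∧ b = 0 ∧ c = 0)) : 1 - hVar n ^ b * aVar n i ^ c * qF n ^ e ≠ 0 := by
  intro h0
  have := eq_zero_of_tVar_zpow_mul_hVar_zpow_mul_aVar_pow_eq_one (a := 2 * e) (b := b) (c := c)
    (i := i) (by
      rw [qF, ← zpow_natCast (tVar n) 2, ← zpow_mul] at h0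
      linear_combination -h0)
  omega

theorem braceF_xResF_succ {n : ℕ} {Aplus Aminus : Finset (Fin n)} {C : Fin n → Fin n → ℤ}
    {i : Fin n} {D : ℤ} (hD : i ∈ Aplus → 0 ≤ D) :
    (1 - xResF n Aplus Aminus C i * qF n ^ (D + 1))
        * braceF (qF n) (hbarF n) (-(tVar n * (hVar n)⁻¹)) (xResF n Aplus Aminus C i) (D + 1)
      = -(tVar n * (hVar n)⁻¹) * ((1 - hbarF n * (xResF n Aplus Aminus C i * qF n ^ D))
          * braceF (qF n) (hbarF n) (-(tVar n * (hVar n)⁻¹)) (xResF n Aplus Aminus C i) D) := by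
  have hh := hVar_ne_zero n
  have hbar : hbarF n = hVar n ^ (2 : ℤ) := by rw [hbarF, zpow_ofNat]
  have hne (b e : ℤ) (c : ℕ) (h : ¬(e = 0 ∧ b = 0 ∧ c = 0)) :=
    one_sub_hVar_zpow_mul_aVar_pow_mul_qF_zpow_ne_zero i h
  refine braceF_succ (pow_ne_zero _ (tVar_ne_zero n)) (by simp [tVar_ne_zero, hh]) ?_ ?_ <;>
    unfold xResF <;> split_ifs with hplus hminus
  -- on `A⁺` the restriction is `x = 1`, and `1 - q^{D+1}` vanishes at `D = -1`
  · simpa using hne 0 (D + 1) 0 (by have := hD hplus; omega)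
  · simpa [hbar] using hne (-2) (D + 1) 0 (by omega)
  · simpa [mul_comm] using hne (-2 * ∑ j ∈ Aminus, C i j) (D + 1) 1 (by omega)
  · exact fun hneg => absurd (hD hplus) (not_le.2 hneg)
  · intro hneg
    rw [mul_inv_cancel_left₀ (show hbarF n ≠ 0 from pow_ne_zero 2 hh)]
    simpa using hne 0 D 0 (by omega)
  · intro _
    convert hne (-2 * ∑ j ∈ Aminus, C i j + 2) D 1 (by omega) using 2
    rw [zpow_add₀ hh, hbar]
    ring

def natAbsRestrict {n : ℕ} (p : Finset (Fin n)) (v : Fin n → ℤ) : {j : Fin n // j ∈ pᶜ} →₀ ℕ :=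
  Finsupp.equivFunOnFinite.symm fun j => (v j).natAbs

@[simp]
theorem natAbsRestrict_apply {n : ℕ} (p : Finset (Fin n)) (v : Fin n → ℤ)
    (j : {j : Fin n // j ∈ pᶜ}) : natAbsRestrict p v j = (v j).natAbs := rfl

section Degrees

variable {n : ℕ} {p Aplus : Finset (Fin n)} {C : Fin n → Fin n → ℤ} {v : Fin n → ℤ}

theorem dDeg_natAbsRestrict_add (hpos : ∀ j ∈ Aplus, 0 ≤ v j)
    (hneg : ∀ j ∈ pᶜ, j ∉ Aplus → v j ≤ 0) (μ : {j : Fin n // j ∈ pᶜ} →₀ ℕ) {j : Fin n}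
    (hj : j ∈ pᶜ) :
    dDeg n p Aplus (natAbsRestrict p v + μ) j = dDeg n p Aplus μ j + v j := by
  simp only [dDeg, mExt, dif_pos hj, Finsupp.add_apply, natAbsRestrict_apply]
  split_ifs with h
  · have := hpos j h
    omega
  · have := hneg j hj h
    omega

theorem DDeg_natAbsRestrict_add (hpos : ∀ j ∈ Aplus, 0 ≤ v j)
    (hneg : ∀ j ∈ pᶜ, j ∉ Aplus → v j ≤ 0) (hrel : ∀ i ∈ p, v i = ∑ j ∈ pᶜ, C i j * v j)
    (μ : {j : Fin n // j ∈ pᶜ} →₀ ℕ) (i : Fin n) :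
    DDeg n p Aplus C (natAbsRestrict p v + μ) i = DDeg n p Aplus C μ i + v i := by
  unfold DDeg
  split_ifs with hi
  · exact dDeg_natAbsRestrict_add hpos hneg μ hi
  · rw [hrel i (by simpa using hi), ← sum_add_distrib]
    refine sum_congr rfl fun j hj => ?_
    rw [dDeg_natAbsRestrict_add hpos hneg μ hj]
    ring

theorem DDeg_nonneg (hAplus : Aplus ⊆ pᶜ) (μ : {j : Fin n // j ∈ pᶜ} →₀ ℕ) {i : Fin n}
    (hi : i ∈ Aplus) : 0 ≤ DDeg n p Aplus C μ i := by
  simp [DDeg, hAplus hi, dDeg, hi]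

theorem DDeg_eq_zero_of_apply_eq_zero {m : {j : Fin n // j ∈ pᶜ} →₀ ℕ}
    {j : {j : Fin n // j ∈ pᶜ}} (hm : m j = 0) : DDeg n p Aplus C m j = 0 := by
  simp [DDeg, j.2, dDeg, mExt, hm]

end Degrees

section Vertex

variable {n : ℕ} {p Aplus Aminus : Finset (Fin n)} {C : Fin n → Fin n → ℤ}

theorem Vcoeff_eq_prod (hA : Aplus ∪ Aminus = pᶜ) (hAdisj : Disjoint Aplus Aminus)
    (μ : {j : Fin n // j ∈ pᶜ} →₀ ℕ) :
    Vcoeff n p Aplus Aminus C μ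
      = tVar n ^ (-∑ i, DDeg n p Aplus C μ i)
        * ∏ i, braceF (qF n) (hbarF n) (-(tVar n * (hVar n)⁻¹)) (xResF n Aplus Aminus C i)
            (DDeg n p Aplus C μ i) := by
  have hDc : ∀ j ∈ pᶜ, DDeg n p Aplus C μ j = dDeg n p Aplus μ j := fun j hj => if_pos hj
  have hsplit (F : Fin n → FF n) : ∏ i ∈ pᶜ, F i = (∏ i ∈ Aplus, F i) * ∏ i ∈ Aminus, F i := by
    rw [← prod_union hAdisj, hA]
  rw [Vcoeff, ← sum_add_sum_compl p, ← prod_mul_prod_compl p, hsplit, sum_congr rfl hDc, add_comm,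
    mul_comm (∏ i ∈ p, _)]
  simp only [mul_assoc]
  refine congrArg₂ _ rfl (congrArg₂ _ ?_ (congrArg₂ _ ?_ rfl))
  · refine prod_congr rfl fun j hj => ?_
    rw [xResF, if_pos hj, hDc j (hA ▸ mem_union_left _ hj)]
  · refine prod_congr rfl fun j hj => ?_
    rw [xResF, if_neg (disjoint_right.1 hAdisj hj), if_pos hj,
      hDc j (hA ▸ mem_union_right _ hj)]

variable {Splus Sminus : Finset (Fin n)} {v : Fin n → ℤ}

theorem prod_circuit_factors_eq_zero (hA : Aplus ∪ Aminus = pᶜ)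
    (hv1 : ∀ i ∈ Splus, v i = 1) (hv2 : ∀ i ∈ Sminus, v i = -1)
    (hv0 : ∀ i, i ∉ Splus ∪ Sminus → v i = 0)
    (heff1 : ∀ j ∈ Aplus, 0 ≤ v j) (heff2 : ∀ j ∈ Aminus, v j ≤ 0)
    {m : {j : Fin n // j ∈ pᶜ} →₀ ℕ} (hm : ¬natAbsRestrict p v ≤ m) :
    (∏ i ∈ Splus, (1 - xResF n Aplus Aminus C i * qF n ^ DDeg n p Aplus C m i))
      * ∏ i ∈ Sminus, (1 - hbarF n * (xResF n Aplus Aminus C i * qF n ^ DDeg n p Aplus C m i))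
      = 0 := by
  obtain ⟨j, hj⟩ : ∃ j, m j < (v j).natAbs := by simpa [Finsupp.le_def] using hm
  have hjS : (j : Fin n) ∈ Splus ∪ Sminus := by
    by_contra h
    simp [hv0 _ h] at hj
  have hv : (v j).natAbs = 1 := by
    rcases mem_union.1 hjS with h | h
    · simp [hv1 _ h]
    · simp [hv2 _ h]
  have hD : DDeg n p Aplus C m j = 0 := DDeg_eq_zero_of_apply_eq_zero (by omega)
  have hjA : (j : Fin n) ∈ Aplus ∪ Aminus := by rw [hA]; exact j.2
  rcases mem_union.1 hjS with h | h
  · have hjA' : (j : Fin n) ∈ Aplus := (mem_union.1 hjA).resolve_right fun h' => by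
      have := heff2 _ h'
      rw [hv1 _ h] at this
      omega
    rw [prod_eq_zero h (by simp [xResF, hjA', hD]), zero_mul]
  · have hjA' : (j : Fin n) ∉ Aplus := fun h' => by
      have := heff1 _ h'
      rw [hv2 _ h] at this
      omega
    have hbar : hbarF n ≠ 0 := pow_ne_zero 2 (hVar_ne_zero n)
    rw [prod_eq_zero h (by simp [xResF, hjA', (mem_union.1 hjA).resolve_left hjA', hD, hbar]),
      mul_zero]

theorem circuit_coeff_shift (hA : Aplus ∪ Aminus = pᶜ) (hAdisj : Disjoint Aplus Aminus)
    (hS : Disjoint Splus Sminus)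
    (hv1 : ∀ i ∈ Splus, v i = 1) (hv2 : ∀ i ∈ Sminus, v i = -1)
    (hv0 : ∀ i, i ∉ Splus ∪ Sminus → v i = 0)
    (hrel : ∀ i ∈ p, v i = ∑ j ∈ pᶜ, C i j * v j)
    (heff1 : ∀ j ∈ Aplus, 0 ≤ v j) (heff2 : ∀ j ∈ Aminus, v j ≤ 0)
    (μ : {j : Fin n // j ∈ pᶜ} →₀ ℕ) :
    (∏ i ∈ Splus, (1 - xResF n Aplus Aminus C i
        * qF n ^ DDeg n p Aplus C (natAbsRestrict p v + μ) i))
      * ((∏ i ∈ Sminus, (1 - hbarF n * (xResF n Aplus Aminus C i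
          * qF n ^ DDeg n p Aplus C (natAbsRestrict p v + μ) i)))
        * Vcoeff n p Aplus Aminus C (natAbsRestrict p v + μ))
      = (-(hVar n)⁻¹) ^ ((Splus.card : ℤ) - (Sminus.card : ℤ))
        * ((∏ i ∈ Splus, (1 - hbarF n * (xResF n Aplus Aminus C i
            * qF n ^ DDeg n p Aplus C μ i)))
          * ((∏ i ∈ Sminus, (1 - xResF n Aplus Aminus C i * qF n ^ DDeg n p Aplus C μ i))
            * Vcoeff n p Aplus Aminus C μ)) := by
  have hAplus : Aplus ⊆ pᶜ := hA ▸ subset_union_left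
  have hneg : ∀ j ∈ pᶜ, j ∉ Aplus → v j ≤ 0 := fun j hj hj' =>
    heff2 j ((mem_union.1 (hA ▸ hj)).resolve_left hj')
  rw [Vcoeff_eq_prod hA hAdisj, Vcoeff_eq_prod hA hAdisj]
  set s := -(tVar n * (hVar n)⁻¹) with hs_def
  set x := xResF n Aplus Aminus C
  set D := DDeg n p Aplus C μ
  set D' := DDeg n p Aplus C (natAbsRestrict p v + μ)
  have hs : s ≠ 0 := by simp [hs_def, tVar_ne_zero, hVar_ne_zero]
  have hshift : ∀ i, D' i = D i + v i := DDeg_natAbsRestrict_add heff1 hneg hrel μ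
  have plus : ∀ i ∈ Splus, (1 - x i * qF n ^ D' i) * braceF (qF n) (hbarF n) s (x i) (D' i)
      = s * ((1 - hbarF n * (x i * qF n ^ D i)) * braceF (qF n) (hbarF n) s (x i) (D i)) := by
    intro i hi
    rw [hshift, hv1 i hi]
    exact braceF_xResF_succ fun h => DDeg_nonneg hAplus μ h
  have minus : ∀ i ∈ Sminus,
      (1 - hbarF n * (x i * qF n ^ D' i)) * braceF (qF n) (hbarF n) s (x i) (D' i)
        = s⁻¹ * ((1 - x i * qF n ^ D i) * braceF (qF n) (hbarF n) s (x i) (D i)) := by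
    intro i hi
    rw [show D i = D' i + 1 by rw [hshift, hv2 i hi]; ring,
      braceF_xResF_succ fun h => DDeg_nonneg hAplus _ h, inv_mul_cancel_left₀ hs]
  have rest : ∀ i ∉ Splus ∪ Sminus, braceF (qF n) (hbarF n) s (x i) (D' i)
      = braceF (qF n) (hbarF n) s (x i) (D i) := fun i hi => by rw [hshift, hv0 i hi, add_zero]
  rw [sum_congr rfl fun i _ => hshift i, sum_add_distrib, sum_eq_card_sub_card hS hv1 hv2 hv0,
    mul_left_comm _ (tVar n ^ _), mul_left_comm _ (tVar n ^ _), ← mul_assoc (∏ i ∈ Splus, _),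
    prod_mul_prod_mul_prod_eq_pow_mul_pow hS plus minus rest, ← mul_assoc,
    zpow_neg_add_mul_pow_mul_inv_pow (tVar_ne_zero n) (hVar_ne_zero n)]
  ring

end Vertex

theorem stmt_11_general (n : ℕ)
    (p : Finset (Fin n))
    (Aplus Aminus : Finset (Fin n)) (hA : Aplus ∪ Aminus = pᶜ)
    (hAdisj : Disjoint Aplus Aminus)
    (C : Fin n → Fin n → ℤ)
    -- the bare vertex series, characterized by its coefficients
    (V : MvPowerSeries {j : Fin n // j ∈ pᶜ} (FF n))
    (hV : ∀ m, MvPowerSeries.coeff (R := FF n) m V = Vcoeff n p Aplus Aminus C m)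
    -- the operators 𝒵ᵢ, characterized by: the coefficient of ζ^m is multiplied by xᵢ q^{Dᵢ(m)}
    (Zop : Fin n → MvPowerSeries {j : Fin n // j ∈ pᶜ} (FF n) →
      MvPowerSeries {j : Fin n // j ∈ pᶜ} (FF n))
    (hZop : ∀ (i : Fin n) (f : MvPowerSeries {j : Fin n // j ∈ pᶜ} (FF n)) (m),
      MvPowerSeries.coeff (R := FF n) m (Zop i f)
        = xResF n Aplus Aminus C i * qF n ^ (DDeg n p Aplus C m i)
          * MvPowerSeries.coeff (R := FF n) m f)
    -- the circuit `S = S⁺ ⊔ S⁻` with relation vector `v`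
    (Splus Sminus : Finset (Fin n)) (hS : Disjoint Splus Sminus)
    (v : Fin n → ℤ)
    (hv1 : ∀ i ∈ Splus, v i = 1) (hv2 : ∀ i ∈ Sminus, v i = -1)
    (hv0 : ∀ i, i ∉ Splus ∪ Sminus → v i = 0)
    (hrel : ∀ i ∈ p, v i = ∑ j ∈ pᶜ, C i j * v j)
    (heff1 : ∀ j ∈ Aplus, 0 ≤ v j) (heff2 : ∀ j ∈ Aminus, v j ≤ 0) :
    Splus.toList.foldr (fun i g => g - Zop i g)
        (Sminus.toList.foldr (fun i g => g - hbarF n • Zop i g) V)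
      = (-(hVar n)⁻¹) ^ ((Splus.card : ℤ) - (Sminus.card : ℤ)) •
          (MvPowerSeries.monomial (R := FF n)
              (Finsupp.equivFunOnFinite.symm fun j : {j : Fin n // j ∈ pᶜ} =>
                (v (j : Fin n)).natAbs) 1
            * Splus.toList.foldr (fun i g => g - hbarF n • Zop i g)
                (Sminus.toList.foldr (fun i g => g - Zop i g) V)) := by
  have hZ := MvPowerSeries.coeff_toList_foldr_sub Zop _ hZop
  have hħZ := MvPowerSeries.coeff_toList_foldr_sub (fun i g => hbarF n • Zop i g) _
    fun i f m => by rw [MvPowerSeries.coeff_smul, hZop, ← mul_assoc]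
  ext m
  simp only [MvPowerSeries.coeff_smul, MvPowerSeries.coeff_monomial_mul, hZ, hħZ, hV]
  split_ifs with hm
  · obtain ⟨μ, rfl⟩ := exists_add_of_le hm
    rw [add_tsub_cancel_left, one_mul]
    exact circuit_coeff_shift hA hAdisj hS hv1 hv2 hv0 hrel heff1 heff2 μ
  · rw [mul_zero, ← mul_assoc, prod_circuit_factors_eq_zero hA hv1 hv2 hv0 heff1 heff2 hm,
      zero_mul]

/-- the q-difference equation in the Kähler parameters satisfied by the
bare vertex function of a hypertoric variety, restricted to a fixed point `p`. -/
theorem stmt_11 (n k d : ℕ) (hk : 1 ≤ k) (hd : 1 ≤ d) (hn : n = k + d)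
    (p : Finset (Fin n)) (hp : p.card = d)
    (Aplus Aminus : Finset (Fin n)) (hA : Aplus ∪ Aminus = pᶜ)
    (hAdisj : Disjoint Aplus Aminus) (hAcard : (Aplus ∪ Aminus).card = k)
    (C : Fin n → Fin n → ℤ)
    -- the bare vertex series, characterized by its coefficients
    (V : MvPowerSeries {j : Fin n // j ∈ pᶜ} (FF n))
    (hV : ∀ m, MvPowerSeries.coeff (R := FF n) m V = Vcoeff n p Aplus Aminus C m)
    -- the operators 𝒵ᵢ, characterized by: the coefficient of ζ^m is multiplied by xᵢ q^{Dᵢ(m)}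
    (Zop : Fin n → MvPowerSeries {j : Fin n // j ∈ pᶜ} (FF n) →
      MvPowerSeries {j : Fin n // j ∈ pᶜ} (FF n))
    (hZop : ∀ (i : Fin n) (f : MvPowerSeries {j : Fin n // j ∈ pᶜ} (FF n)) (m),
      MvPowerSeries.coeff (R := FF n) m (Zop i f)
        = xResF n Aplus Aminus C i * qF n ^ (DDeg n p Aplus C m i)
          * MvPowerSeries.coeff (R := FF n) m f)
    -- the circuit `S = S⁺ ⊔ S⁻` with relation vector `v`
    (Splus Sminus : Finset (Fin n)) (hS : Disjoint Splus Sminus)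
    (v : Fin n → ℤ)
    (hv1 : ∀ i ∈ Splus, v i = 1) (hv2 : ∀ i ∈ Sminus, v i = -1)
    (hv0 : ∀ i, i ∉ Splus ∪ Sminus → v i = 0)
    (hrel : ∀ i ∈ p, v i = ∑ j ∈ pᶜ, C i j * v j)
    (heff1 : ∀ j ∈ Aplus, 0 ≤ v j) (heff2 : ∀ j ∈ Aminus, v j ≤ 0) :
    Splus.toList.foldr (fun i g => g - Zop i g)
        (Sminus.toList.foldr (fun i g => g - hbarF n • Zop i g) V)
      = (-(hVar n)⁻¹) ^ ((Splus.card : ℤ) - (Sminus.card : ℤ)) •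
          (MvPowerSeries.monomial (R := FF n)
              (Finsupp.equivFunOnFinite.symm fun j : {j : Fin n // j ∈ pᶜ} =>
                (v (j : Fin n)).natAbs) 1
            * Splus.toList.foldr (fun i g => g - hbarF n • Zop i g)
                (Sminus.toList.foldr (fun i g => g - Zop i g) V)) :=
  stmt_11_general n p Aplus Aminus hA hAdisj C V hV Zop hZop Splus Sminus hS v hv1 hv2 hv0 hrel
    heff1 heff2

end
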